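/- The strict constraint X <_m Y is GAC if and only if for every i < n both of the following hold: (1) the multiset {min(DX 0), …, min(DX (i−1)), max(DX i), min(DX (i+1)), …, min(DX (n−1))} <_m ceiling(Y); and (2) floor(X) <_m the multiset {max(DY 0), …, max(DY (i−1)), min(DY i), max(DY (i+1)), …, max(DY (n−1))}. -/
import Mathlib


namespace MsetPaper

/-- The maximum element of a multiset of naturals (`0` for the empty multiset). -/
def mmax (s : Multiset ℕ) : ℕ := s.sup

/-- The strict multiset order `x <ₘ y` of the paper: either `x` is empty and `y` is not,
or both are nonempty and either `max x < max y`, or the maxima agree and the multisets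
with one occurrence of the maximum removed are again strictly ordered. -/
inductive MLt : Multiset ℕ → Multiset ℕ → Prop
  | empty {y : Multiset ℕ} : y ≠ 0 → MLt 0 y
  | maxLt {x y : Multiset ℕ} : x ≠ 0 → y ≠ 0 → mmax x < mmax y → MLt x y
  | maxEq {x y : Multiset ℕ} : x ≠ 0 → y ≠ 0 → mmax x = mmax y →
      MLt (x.erase (mmax x)) (y.erase (mmax y)) → MLt x y

/-- The (non-strict) multiset order `x ≤ₘ y`. -/
def MLe (x y : Multiset ℕ) : Prop := MLt x y ∨ x = y

/-- The multiset of values taken by a vector. -/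
def msetOf {n : ℕ} (x : Fin n → ℕ) : Multiset ℕ := (List.ofFn x : List ℕ)

/-- `(x, y)` is a satisfying assignment for the strict constraint `X <ₘ Y`. -/
def SatLt {n : ℕ} (DX DY : Fin n → Finset ℕ) (x y : Fin n → ℕ) : Prop :=
  (∀ i, x i ∈ DX i) ∧ (∀ i, y i ∈ DY i) ∧ MLt (msetOf x) (msetOf y)

/-- The value `v` is consistent for the variable `X i` (strict constraint). -/
def ConsXLt {n : ℕ} (DX DY : Fin n → Finset ℕ) (i : Fin n) (v : ℕ) : Prop :=
  ∃ x y, SatLt DX DY x y ∧ x i = v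

/-- The value `v` is consistent for the variable `Y i` (strict constraint). -/
def ConsYLt {n : ℕ} (DX DY : Fin n → Finset ℕ) (i : Fin n) (v : ℕ) : Prop :=
  ∃ x y, SatLt DX DY x y ∧ y i = v

/-- The strict constraint `X <ₘ Y` is generalised arc-consistent. -/
def GACLt {n : ℕ} (DX DY : Fin n → Finset ℕ) : Prop :=
  (∀ i, ∀ v ∈ DX i, ConsXLt DX DY i v) ∧ (∀ i, ∀ v ∈ DY i, ConsYLt DX DY i v)

lemma mmax_mem {s : Multiset ℕ} (hs : s ≠ 0) : mmax s ∈ s := by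
  induction s using Multiset.induction with
  | empty => exact absurd rfl hs
  | cons a t ih =>
    by_cases ht : t = 0
    · subst ht; simp [mmax]
    · have := ih ht
      rcases le_total a (mmax t) with h | h
      · have : mmax (a ::ₘ t) = mmax t := by
          simp only [mmax, Multiset.sup_cons]; exact sup_eq_right.mpr h
        rw [this]; exact Multiset.mem_cons_of_mem (ih ht)
      · have : mmax (a ::ₘ t) = a := by
          simp only [mmax, Multiset.sup_cons]; exact sup_eq_left.mpr h
        rw [this]; exact Multiset.mem_cons_self a t

lemma mmax_le_of_rel {s t : Multiset ℕ} (h : Multiset.Rel (· ≤ ·) s t) : mmax s ≤ mmax t := by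
  induction h with
  | zero => simp [mmax]
  | @cons a b s t hab hst ih =>
    simp only [mmax, Multiset.sup_cons] at *
    exact sup_le_sup hab ih

lemma rel_ne_zero {s t : Multiset ℕ} (h : Multiset.Rel (· ≤ ·) s t) (hs : s ≠ 0) : t ≠ 0 := by
  intro ht; subst ht; rw [Multiset.rel_zero_right] at h; exact hs h

lemma rel_erase_max {s t : Multiset ℕ} (h : Multiset.Rel (· ≤ ·) s t) (hs : s ≠ 0)
    (heq : mmax s = mmax t) :
    Multiset.Rel (· ≤ ·) (s.erase (mmax s)) (t.erase (mmax t)) := by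
  have hm : mmax s ∈ s := mmax_mem hs
  have h' : Multiset.Rel (· ≤ ·) (mmax s ::ₘ s.erase (mmax s)) t := by
    rwa [Multiset.cons_erase hm]
  rw [Multiset.rel_cons_left] at h'
  obtain ⟨b, t', hab, hrel, ht⟩ := h'
  have hbmem : b ∈ t := ht ▸ Multiset.mem_cons_self b t'
  have hb : b = mmax t := le_antisymm (Multiset.le_sup hbmem) (heq ▸ hab)
  subst hb
  have ht2 : t.erase (mmax s) = t' := by rw [ht, heq, Multiset.erase_cons_head]
  rw [show t.erase (mmax t) = t' by rw [← heq]; exact ht2]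
  exact hrel

lemma mlt_mono_left {s t : Multiset ℕ} (h : MLt s t) :
    ∀ s', Multiset.Rel (· ≤ ·) s' s → MLt s' t := by
  induction h with
  | @empty y hy =>
    intro s' hr
    rw [Multiset.rel_zero_right] at hr
    exact hr ▸ MLt.empty hy
  | @maxLt x y hx hy hlt =>
    intro s' hr
    by_cases h0 : s' = 0
    · exact h0 ▸ MLt.empty hy
    · exact MLt.maxLt h0 hy (lt_of_le_of_lt (mmax_le_of_rel hr) hlt)
  | @maxEq x y hx hy heq hrec ih =>
    intro s' hr
    by_cases h0 : s' = 0
    · exact h0 ▸ MLt.empty hy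
    · rcases lt_or_eq_of_le (mmax_le_of_rel hr) with hlt | heq'
      · exact MLt.maxLt h0 hy (heq ▸ hlt)
      · exact MLt.maxEq h0 hy (heq' ▸ heq) (ih _ (rel_erase_max hr h0 heq'))

lemma mlt_mono_right {s t : Multiset ℕ} (h : MLt s t) :
    ∀ t', Multiset.Rel (· ≤ ·) t t' → MLt s t' := by
  induction h with
  | @empty y hy =>
    intro t' hr
    exact MLt.empty (rel_ne_zero hr hy)
  | @maxLt x y hx hy hlt =>
    intro t' hr
    exact MLt.maxLt hx (rel_ne_zero hr hy) (lt_of_lt_of_le hlt (mmax_le_of_rel hr))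
  | @maxEq x y hx hy heq hrec ih =>
    intro t' hr
    rcases lt_or_eq_of_le (mmax_le_of_rel hr) with hlt | heq'
    · exact MLt.maxLt hx (rel_ne_zero hr hy) (heq ▸ hlt)
    · exact MLt.maxEq hx (rel_ne_zero hr hy) (heq.trans heq')
        (ih _ (rel_erase_max hr hy heq'))

lemma rel_msetOf {n : ℕ} {x x' : Fin n → ℕ} (h : ∀ j, x j ≤ x' j) :
    Multiset.Rel (· ≤ ·) (msetOf x) (msetOf x') := by
  unfold msetOf
  rw [List.ofFn_eq_map, List.ofFn_eq_map, ← Multiset.map_coe, ← Multiset.map_coe]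
  induction (List.finRange n : Multiset (Fin n)) using Multiset.induction with
  | empty => simp [Multiset.Rel.zero]
  | cons a s ih =>
    simp only [Multiset.map_cons]
    exact Multiset.Rel.cons (h a) ih

/-- `X <ₘ Y` is GAC iff for all `i`, `floor(X)` with `X i` set to its maximum is
`<ₘ ceiling(Y)`, and `floor(X) <ₘ ceiling(Y)` with `Y i` set to its minimum. -/
theorem stmt8 (n : ℕ) (hn : 1 ≤ n) (DX DY : Fin n → Finset ℕ)
    (hDX : ∀ i, (DX i).Nonempty) (hDY : ∀ i, (DY i).Nonempty) :
    GACLt DX DY ↔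
      ∀ i : Fin n,
        MLt (msetOf (Function.update (fun j => (DX j).min' (hDX j)) i ((DX i).max' (hDX i))))
            (msetOf fun j => (DY j).max' (hDY j)) ∧
        MLt (msetOf fun j => (DX j).min' (hDX j))
            (msetOf (Function.update (fun j => (DY j).max' (hDY j)) i ((DY i).min' (hDY i)))) := by
  constructor
  · rintro ⟨hX, hY⟩ i
    constructor
    · obtain ⟨x, y, ⟨hx, hy, hlt⟩, hxi⟩ := hX i ((DX i).max' (hDX i)) (Finset.max'_mem _ _)
      have h1 : Multiset.Rel (· ≤ ·)
          (msetOf (Function.update (fun j => (DX j).min' (hDX j)) i ((DX i).max' (hDX i))))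
          (msetOf x) := by
        refine rel_msetOf fun j => ?_
        by_cases hj : j = i
        · subst hj; rw [Function.update_self, hxi]
        · rw [Function.update_of_ne hj]; exact Finset.min'_le _ _ (hx j)
      have h2 : Multiset.Rel (· ≤ ·) (msetOf y) (msetOf fun j => (DY j).max' (hDY j)) :=
        rel_msetOf fun j => Finset.le_max' _ _ (hy j)
      exact mlt_mono_right (mlt_mono_left hlt _ h1) _ h2
    · obtain ⟨x, y, ⟨hx, hy, hlt⟩, hyi⟩ := hY i ((DY i).min' (hDY i)) (Finset.min'_mem _ _)
      have h1 : Multiset.Rel (· ≤ ·) (msetOf fun j => (DX j).min' (hDX j)) (msetOf x) :=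
        rel_msetOf fun j => Finset.min'_le _ _ (hx j)
      have h2 : Multiset.Rel (· ≤ ·) (msetOf y)
          (msetOf (Function.update (fun j => (DY j).max' (hDY j)) i ((DY i).min' (hDY i)))) := by
        refine rel_msetOf fun j => ?_
        by_cases hj : j = i
        · subst hj; rw [Function.update_self, hyi]
        · rw [Function.update_of_ne hj]; exact Finset.le_max' _ _ (hy j)
      exact mlt_mono_right (mlt_mono_left hlt _ h1) _ h2
  · intro hcond
    constructor
    · intro i v hv
      refine ⟨Function.update (fun j => (DX j).min' (hDX j)) i v,
        (fun j => (DY j).max' (hDY j)), ⟨?_, ?_, ?_⟩, Function.update_self _ _ _⟩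
      · intro j
        by_cases hj : j = i
        · subst hj; rw [Function.update_self]; exact hv
        · rw [Function.update_of_ne hj]; exact Finset.min'_mem _ _
      · intro j; exact Finset.max'_mem _ _
      · refine mlt_mono_left (hcond i).1 _ (rel_msetOf fun j => ?_)
        by_cases hj : j = i
        · subst hj; simp only [Function.update_self]; exact Finset.le_max' _ _ hv
        · simp [Function.update_of_ne hj]
    · intro i v hv
      refine ⟨(fun j => (DX j).min' (hDX j)),
        Function.update (fun j => (DY j).max' (hDY j)) i v, ⟨?_, ?_, ?_⟩, Function.update_self _ _ _⟩
      · intro j; exact Finset.min'_mem _ _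
      · intro j
        by_cases hj : j = i
        · subst hj; rw [Function.update_self]; exact hv
        · rw [Function.update_of_ne hj]; exact Finset.max'_mem _ _
      · refine mlt_mono_right (hcond i).2 _ (rel_msetOf fun j => ?_)
        by_cases hj : j = i
        · subst hj; simp only [Function.update_self]; exact Finset.min'_le _ _ hv
        · simp [Function.update_of_ne hj]

end MsetPaper
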